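/- Let A, C ∈ ℝ^{n×n}, B, D ∈ ℝ^{n×m}, let Q ∈ ℝ^{n×n} and R ∈ ℝ^{m×m} be symmetric positive definite, and let γ ∈ [0,1). Let (L_i)_{i≥0} and symmetric positive definite (P_i)_{i≥0} satisfy the policy-iteration recursion: P_i = γ(A+BL_i)ᵀP_i(A+BL_i) + γ(C+DL_i)ᵀP_i(C+DL_i) + L_iᵀRL_i + Q and L_{i+1} = −(R + γBᵀP_iB + γDᵀP_iD)⁻¹(γBᵀP_iA + γDᵀP_iC) for all i. Suppose P* is a symmetric positive definite solution of the stochastic algebraic Riccati equation P* = Q + γAᵀP*A + γCᵀP*C − (γAᵀP*B + γCᵀP*D)(R + γBᵀP*B + γDᵀP*D)⁻¹(γBᵀP*A + γDᵀP*C). Then P* ≤ P_i for every i, i.e. P_i − P* is positive semidefinite. -/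

import Mathlib

open Matrix Filter Topology
open scoped MatrixOrder

/-!
Fix `i` and let `T` be the positive linear map
`X ↦ γ (A + B Lᵢ)ᵀ X (A + B Lᵢ) + γ (C + D Lᵢ)ᵀ X (C + D Lᵢ)`.
Completing the square in the Riccati equation gives `Δ - T Δ = Zᵀ W Z ≥ 0` for `Δ = Pᵢ - P*`,
with `W = R + γ BᵀP*B + γ DᵀP*D ≻ 0`. The Lyapunov equation `Pᵢ - T Pᵢ = LᵢᵀRLᵢ + Q ≥ Q ≻ 0`
makes `T` a strict contraction along `Pᵢ`: `T Pᵢ ≤ ρ Pᵢ` for some `ρ < 1`. Hence `Δ ≥ -t Pᵢ`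
implies `Δ ≥ T Δ ≥ -t ρ Pᵢ`; starting from `P* ≤ c Pᵢ` and iterating, `Δ ≥ -t ρᵏ Pᵢ` for all `k`,
so `Δ ≥ 0`.
-/

section OrderedModule

variable {E : Type*} [AddCommGroup E] [PartialOrder E] [IsOrderedAddMonoid E] [Module ℝ E]
  [PosSMulMono ℝ E]

theorem add_smul_pow_nonneg_of_map_le (T : E →ₗ[ℝ] E) (hT : ∀ x, 0 ≤ x → 0 ≤ T x)
    {P Δ : E} {ρ t : ℝ} (hρ : 0 ≤ ρ) (hP : T P ≤ ρ • P) (hΔ : T Δ ≤ Δ) (ht : 0 ≤ t)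
    (h : 0 ≤ Δ + t • P) (k : ℕ) : 0 ≤ Δ + (t * ρ ^ k) • P := by
  induction k with
  | zero => simpa using h
  | succ k ih =>
    calc 0 ≤ T (Δ + (t * ρ ^ k) • P) := hT _ ih
      _ = T Δ + (t * ρ ^ k) • T P := by rw [map_add, map_smul]
      _ ≤ Δ + (t * ρ ^ k) • (ρ • P) :=
        add_le_add hΔ (smul_le_smul_of_nonneg_left hP (by positivity))
      _ = Δ + (t * ρ ^ (k + 1)) • P := by rw [smul_smul, pow_succ, mul_assoc]

end OrderedModule

namespace Matrix

variable {ι κ : Type*} [Fintype ι] [Fintype κ]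

theorem PosSemidef.transpose_mul_mul_same {X : Matrix ι ι ℝ} (hX : X.PosSemidef)
    (F : Matrix ι κ ℝ) : (Fᵀ * X * F).PosSemidef := by
  simpa only [conjTranspose_eq_transpose_of_trivial] using hX.conjTranspose_mul_mul_same F

theorem nonneg_of_tendsto_add_smul {Δ P : Matrix ι ι ℝ} {ε : ℕ → ℝ} (hΔ : Δ.IsHermitian)
    (hε : Tendsto ε atTop (𝓝 0)) (h : ∀ k, 0 ≤ Δ + ε k • P) : 0 ≤ Δ := by
  refine nonneg_iff_posSemidef.2 (.of_dotProduct_mulVec_nonneg hΔ fun x => ?_)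
  have hlim : Tendsto (fun k => star x ⬝ᵥ (Δ + ε k • P) *ᵥ x) atTop
      (𝓝 (star x ⬝ᵥ Δ *ᵥ x)) := by
    simp only [add_mulVec, smul_mulVec, dotProduct_add, dotProduct_smul, smul_eq_mul]
    simpa using tendsto_const_nhds.add (hε.mul_const (star x ⬝ᵥ P *ᵥ x))
  exact ge_of_tendsto' hlim fun k => (nonneg_iff_posSemidef.1 (h k)).dotProduct_mulVec_nonneg x

theorem nonneg_of_map_le_self (T : Matrix ι ι ℝ →ₗ[ℝ] Matrix ι ι ℝ)
    (hT : ∀ X, 0 ≤ X → 0 ≤ T X) {P Δ : Matrix ι ι ℝ} {ρ t : ℝ} (hρ₀ : 0 ≤ ρ) (hρ₁ : ρ < 1)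
    (hP : T P ≤ ρ • P) (hΔh : Δ.IsHermitian) (hΔ : T Δ ≤ Δ) (ht : 0 ≤ t)
    (h : 0 ≤ Δ + t • P) : 0 ≤ Δ :=
  nonneg_of_tendsto_add_smul hΔh
    (by simpa using (tendsto_pow_atTop_nhds_zero_of_lt_one hρ₀ hρ₁).const_mul t)
    (add_smul_pow_nonneg_of_map_le T hT hρ₀ hP hΔ ht h)

variable [DecidableEq ι]

theorem PosDef.eventually_le_smul {P Q : Matrix ι ι ℝ} (hQ : Q.PosDef) (hP : P.IsHermitian) :
    ∀ᶠ c : ℝ in atTop, P ≤ c • Q := by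
  rcases subsingleton_or_nontrivial (Matrix ι ι ℝ) with _ | _
  · exact .of_forall fun c => (Subsingleton.elim _ _).le
  obtain ⟨r, hr, hrQ⟩ := (CFC.exists_pos_algebraMap_le_iff hQ.isHermitian.isSelfAdjoint).2
    fun x hx => (isStrictlyPositive_iff_posDef.2 hQ).spectrum_pos hx
  obtain ⟨s, hs⟩ := P.finite_real_spectrum.bddAbove
  filter_upwards [eventually_ge_atTop (s / r), eventually_ge_atTop 0] with c hsc hc
  calc P ≤ algebraMap ℝ _ s := le_algebraMap_of_spectrum_le hs hP.isSelfAdjoint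
    _ ≤ algebraMap ℝ _ (c * r) := algebraMap_mono _ ((div_le_iff₀ hr).1 hsc)
    _ = c • algebraMap ℝ _ r := by rw [map_mul, Algebra.smul_def]
    _ ≤ c • Q := smul_le_smul_of_nonneg_left hrQ hc

theorem PosDef.exists_le_smul_of_add_eq {X Y W Q : Matrix ι ι ℝ} (hQ : Q.PosDef)
    (hX : X.IsHermitian) (hQW : Q ≤ W) (h : Y + W = X) :
    ∃ ρ : ℝ, 0 ≤ ρ ∧ ρ < 1 ∧ Y ≤ ρ • X := by
  obtain ⟨c, hXc, hc⟩ := ((hQ.eventually_le_smul hX).and (eventually_ge_atTop 1)).exists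
  have hc₀ : 0 < c := by linarith
  refine ⟨1 - c⁻¹, by simp [inv_le_one_of_one_le₀ hc], by simp [hc₀], ?_⟩
  have hXW : c⁻¹ • X ≤ W :=
    calc c⁻¹ • X ≤ c⁻¹ • c • Q := smul_le_smul_of_nonneg_left hXc (by positivity)
      _ = Q := by rw [smul_smul, inv_mul_cancel₀ hc₀.ne', one_smul]
      _ ≤ W := hQW
  calc Y = X - W := eq_sub_of_add_eq h
    _ ≤ X - c⁻¹ • X := sub_le_sub_left hXW X
    _ = (1 - c⁻¹) • X := by rw [sub_smul, one_smul]

omit [Fintype ι] [DecidableEq ι] in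
theorem complete_square [DecidableEq κ] {W : Matrix κ κ ℝ} (hW : W.PosDef) (L N : Matrix κ ι ℝ) :
    (L + W⁻¹ * N)ᵀ * W * (L + W⁻¹ * N) = Lᵀ * W * L + Lᵀ * N + Nᵀ * L + Nᵀ * W⁻¹ * N := by
  have hdet : IsUnit W.det := (isUnit_iff_isUnit_det W).1 hW.isUnit
  have hWinv : (W⁻¹)ᵀ = W⁻¹ := by
    rw [transpose_nonsing_inv, (isHermitian_iff_isSymm.1 hW.isHermitian).eq]
  simp only [transpose_add, transpose_mul, hWinv, Matrix.add_mul, Matrix.mul_add,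
    Matrix.mul_assoc, mul_nonsing_inv_cancel_left W _ hdet, nonsing_inv_mul_cancel_left W _ hdet]
  abel

end Matrix

section Riccati

variable {ι κ : Type*} [Fintype ι] [Fintype κ]

def lyapunovMap (γ : ℝ) (F G : Matrix ι ι ℝ) : Matrix ι ι ℝ →ₗ[ℝ] Matrix ι ι ℝ where
  toFun X := γ • (Fᵀ * X * F) + γ • (Gᵀ * X * G)
  map_add' X Y := by
    simp only [Matrix.mul_add, Matrix.add_mul, smul_add]
    abel
  map_smul' c X := by
    simp only [Matrix.mul_smul, Matrix.smul_mul, smul_add, smul_comm γ c, RingHom.id_apply]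

@[simp]
theorem lyapunovMap_apply (γ : ℝ) (F G X : Matrix ι ι ℝ) :
    lyapunovMap γ F G X = γ • (Fᵀ * X * F) + γ • (Gᵀ * X * G) := rfl

theorem lyapunovMap_nonneg {γ : ℝ} (hγ : 0 ≤ γ) (F G : Matrix ι ι ℝ) {X : Matrix ι ι ℝ}
    (hX : 0 ≤ X) : 0 ≤ lyapunovMap γ F G X := by
  rw [nonneg_iff_posSemidef] at hX ⊢
  exact ((hX.transpose_mul_mul_same F).smul hγ).add ((hX.transpose_mul_mul_same G).smul hγ)

variable [DecidableEq κ] (A : Matrix ι ι ℝ) (B : Matrix ι κ ℝ) (C : Matrix ι ι ℝ)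
  (D : Matrix ι κ ℝ) (Q : Matrix ι ι ℝ) (R : Matrix κ κ ℝ) (γ : ℝ)

def controlWeight (P : Matrix ι ι ℝ) : Matrix κ κ ℝ :=
  R + γ • (Bᵀ * P * B) + γ • (Dᵀ * P * D)

def crossTerm (P : Matrix ι ι ℝ) : Matrix κ ι ℝ :=
  γ • (Bᵀ * P * A) + γ • (Dᵀ * P * C)

noncomputable def riccatiMap (P : Matrix ι ι ℝ) : Matrix ι ι ℝ :=
  Q + γ • (Aᵀ * P * A) + γ • (Cᵀ * P * C) -
    (γ • (Aᵀ * P * B) + γ • (Cᵀ * P * D)) * (controlWeight B D R γ P)⁻¹ * crossTerm A B C D γ P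

omit [DecidableEq κ] in
theorem controlWeight_posDef {R : Matrix κ κ ℝ} {γ : ℝ} {P : Matrix ι ι ℝ} (hR : R.PosDef)
    (hγ : 0 ≤ γ) (hP : P.PosSemidef) : (controlWeight B D R γ P).PosDef :=
  (hR.add_posSemidef ((hP.transpose_mul_mul_same B).smul hγ)).add_posSemidef
    ((hP.transpose_mul_mul_same D).smul hγ)

theorem lyapunovMap_add_stageCost {P : Matrix ι ι ℝ} (hP : P.IsHermitian)
    (hW : (controlWeight B D R γ P).PosDef) (L : Matrix κ ι ℝ) :
    lyapunovMap γ (A + B * L) (C + D * L) P + (Lᵀ * R * L + Q) =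
      riccatiMap A B C D Q R γ P +
        (L + (controlWeight B D R γ P)⁻¹ * crossTerm A B C D γ P)ᵀ * controlWeight B D R γ P *
          (L + (controlWeight B D R γ P)⁻¹ * crossTerm A B C D γ P) := by
  have hPt : Pᵀ = P := (isHermitian_iff_isSymm.1 hP).eq
  rw [complete_square hW]
  simp only [lyapunovMap_apply, riccatiMap, controlWeight, crossTerm, transpose_add,
    transpose_smul, transpose_mul, transpose_transpose, hPt, Matrix.mul_add, Matrix.add_mul,
    Matrix.smul_mul, Matrix.mul_smul, smul_add, Matrix.mul_assoc]
  abel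

end Riccati

theorem stmt12_general {n m : ℕ} (A C : Matrix (Fin n) (Fin n) ℝ)
    (B D : Matrix (Fin n) (Fin m) ℝ)
    (Q : Matrix (Fin n) (Fin n) ℝ) (R : Matrix (Fin m) (Fin m) ℝ) (γ : ℝ)
    (hQ : Q.PosDef) (hR : R.PosDef) (hγ0 : 0 ≤ γ)
    (L : ℕ → Matrix (Fin m) (Fin n) ℝ) (P : ℕ → Matrix (Fin n) (Fin n) ℝ)
    (hPpd : ∀ i, (P i).PosDef)
    (hsle : ∀ i, P i = γ • ((A + B * L i)ᵀ * P i * (A + B * L i)) +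
      γ • ((C + D * L i)ᵀ * P i * (C + D * L i)) + (L i)ᵀ * R * (L i) + Q)
    (Pstar : Matrix (Fin n) (Fin n) ℝ) (hPstar : Pstar.PosDef)
    (hsare : Pstar = Q + γ • (Aᵀ * Pstar * A) + γ • (Cᵀ * Pstar * C) -
      (γ • (Aᵀ * Pstar * B) + γ • (Cᵀ * Pstar * D)) *
        (R + γ • (Bᵀ * Pstar * B) + γ • (Dᵀ * Pstar * D))⁻¹ *
        (γ • (Bᵀ * Pstar * A) + γ • (Dᵀ * Pstar * C))) :
    ∀ i, (P i - Pstar).PosSemidef := by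
  intro i
  set T := lyapunovMap γ (A + B * L i) (C + D * L i)
  set W := controlWeight B D R γ Pstar
  set Z := L i + W⁻¹ * crossTerm A B C D γ Pstar
  have hW : W.PosDef := controlWeight_posDef B D hR hγ0 hPstar.posSemidef
  have hcost : T (P i) + ((L i)ᵀ * R * L i + Q) = P i := by
    rw [lyapunovMap_apply, ← add_assoc, ← hsle i]
  have hriccati : T Pstar + ((L i)ᵀ * R * L i + Q) = Pstar + Zᵀ * W * Z := by
    rw [lyapunovMap_add_stageCost A B C D Q R γ hPstar.isHermitian hW]
    exact congrArg (· + Zᵀ * W * Z) hsare.symm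
  have hΔ : T (P i - Pstar) ≤ P i - Pstar := by
    have hgap : P i - Pstar - T (P i - Pstar) = Zᵀ * W * Z := by
      rw [map_sub, eq_sub_of_add_eq hcost, eq_sub_of_add_eq hriccati]
      abel
    rw [le_iff, hgap]
    exact hW.posSemidef.transpose_mul_mul_same Z
  obtain ⟨ρ, hρ₀, hρ₁, hρ⟩ := hQ.exists_le_smul_of_add_eq (hPpd i).isHermitian
    (le_add_of_nonneg_left ((hR.posSemidef.transpose_mul_mul_same (L i)).nonneg)) hcost
  obtain ⟨c, hc, hc₁⟩ :=
    (((hPpd i).eventually_le_smul hPstar.isHermitian).and (eventually_ge_atTop 1)).exists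
  refine nonneg_iff_posSemidef.1 <| nonneg_of_map_le_self T (fun X => lyapunovMap_nonneg hγ0 _ _)
    hρ₀ hρ₁ hρ ((hPpd i).isHermitian.sub hPstar.isHermitian) hΔ (sub_nonneg.2 hc₁) ?_
  have hshift : P i - Pstar + (c - 1) • P i = c • P i - Pstar := by
    rw [sub_smul, one_smul]
    abel
  exact hshift ▸ sub_nonneg.2 hc

theorem stmt12 {n m : ℕ} (A C : Matrix (Fin n) (Fin n) ℝ)
    (B D : Matrix (Fin n) (Fin m) ℝ)
    (Q : Matrix (Fin n) (Fin n) ℝ) (R : Matrix (Fin m) (Fin m) ℝ) (γ : ℝ)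
    (hQ : Q.PosDef) (hR : R.PosDef) (hγ0 : 0 ≤ γ) (hγ1 : γ < 1)
    (L : ℕ → Matrix (Fin m) (Fin n) ℝ) (P : ℕ → Matrix (Fin n) (Fin n) ℝ)
    (hPpd : ∀ i, (P i).PosDef)
    (hsle : ∀ i, P i = γ • ((A + B * L i)ᵀ * P i * (A + B * L i)) +
      γ • ((C + D * L i)ᵀ * P i * (C + D * L i)) + (L i)ᵀ * R * (L i) + Q)
    (hupd : ∀ i, L (i + 1) = -((R + γ • (Bᵀ * P i * B) + γ • (Dᵀ * P i * D))⁻¹ *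
      (γ • (Bᵀ * P i * A) + γ • (Dᵀ * P i * C))))
    (Pstar : Matrix (Fin n) (Fin n) ℝ) (hPstar : Pstar.PosDef)
    (hsare : Pstar = Q + γ • (Aᵀ * Pstar * A) + γ • (Cᵀ * Pstar * C) -
      (γ • (Aᵀ * Pstar * B) + γ • (Cᵀ * Pstar * D)) *
        (R + γ • (Bᵀ * Pstar * B) + γ • (Dᵀ * Pstar * D))⁻¹ *
        (γ • (Bᵀ * Pstar * A) + γ • (Dᵀ * Pstar * C))) :
    ∀ i, (P i - Pstar).PosSemidef :=
  stmt12_general A C B D Q R γ hQ hR hγ0 L P hPpd hsle Pstar hPstar hsare
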